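/- arXiv:2407.12590 — 14 statements merged into one kernel-verified Lean document; each statement's English description precedes it below -/
import Mathlib

section
/- An ideal I of R with I ∩ S = ∅ is an S-J-ideal if and only if there exists s ∈ S such that for all ideals A and B of R with A·B ⊆ I, either s·A ⊆ J(R) or s·B ⊆ I. -/
open Ideal

/-- `S` is a multiplicatively closed subset of `R`: `1 ∈ S` and `S` is closed under
multiplication. -/
def MulClosed {R : Type*} [CommRing R] (S : Set R) : Prop :=
  (1 : R) ∈ S ∧ ∀ a ∈ S, ∀ b ∈ S, a * b ∈ S

/-- `I` is an `S`-`𝒥`-ideal associated with `s ∈ S`: for all `a b : R`, `a * b ∈ I`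
implies `s * a ∈ 𝒥(R)` or `s * b ∈ I`, where `𝒥(R)` is the Jacobson radical of `R`. -/
def SJIdealWith {R : Type*} [CommRing R] (S : Set R) (I : Ideal R) (s : R) : Prop :=
  s ∈ S ∧ ∀ a b : R, a * b ∈ I → s * a ∈ (⊥ : Ideal R).jacobson ∨ s * b ∈ I

/-- `I` is an `S`-`𝒥`-ideal: `I` is disjoint from `S` and some `s ∈ S` works. -/
def IsSJIdeal {R : Type*} [CommRing R] (S : Set R) (I : Ideal R) : Prop :=
  S ∩ (I : Set R) = ∅ ∧ ∃ s, SJIdealWith S I s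

theorem forall_mul_mem_or_iff_forall_ideal_mul_le_or {R : Type*} [CommRing R]
    (J I : Ideal R) (s : R) :
    (∀ a b : R, a * b ∈ I → s * a ∈ J ∨ s * b ∈ I) ↔
      ∀ A B : Ideal R, A * B ≤ I → (∀ a ∈ A, s * a ∈ J) ∨ (∀ b ∈ B, s * b ∈ I) := by
  constructor
  · intro h A B hAB
    by_contra! hne
    obtain ⟨⟨a, haA, haJ⟩, b, hbB, hbI⟩ := hne
    exact (h a b (hAB (mul_mem_mul haA hbB))).elim haJ hbI
  · intro h a b hab
    have hspan : span {a} * span {b} ≤ I := by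
      rwa [span_singleton_mul_span_singleton, span_singleton_le_iff_mem]
    exact (h _ _ hspan).imp (· a (mem_span_singleton_self a)) (· b (mem_span_singleton_self b))

theorem stmt1_general {R : Type*} [CommRing R] (S : Set R)
    (I : Ideal R) (hdisj : S ∩ (I : Set R) = ∅) :
    IsSJIdeal S I ↔
      ∃ s ∈ S, ∀ A B : Ideal R, A * B ≤ I →
        (∀ a ∈ A, s * a ∈ (⊥ : Ideal R).jacobson) ∨ (∀ b ∈ B, s * b ∈ I) := by
  simp only [IsSJIdeal, SJIdealWith, hdisj, true_and,
    forall_mul_mem_or_iff_forall_ideal_mul_le_or]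

theorem stmt1 {R : Type*} [CommRing R] (S : Set R) (hS : MulClosed S)
    (I : Ideal R) (hdisj : S ∩ (I : Set R) = ∅) :
    IsSJIdeal S I ↔
      ∃ s ∈ S, ∀ A B : Ideal R, A * B ≤ I →
        (∀ a ∈ A, s * a ∈ (⊥ : Ideal R).jacobson) ∨ (∀ b ∈ B, s * b ∈ I) :=
  stmt1_general S I hdisj
end

section
/- Let I be an ideal of R with I ∩ S = ∅. If (I : s) is a J-ideal of R for some s ∈ S, then I is an S-J-ideal of R. -/
open Ideal

/-- A proper ideal `I` of `R` is a `𝒥`-ideal if for all `a b : R` with `a * b ∈ I`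
and `a ∉ 𝒥(R)`, one has `b ∈ I`. -/
def IsJIdeal {R : Type*} [CommRing R] (I : Ideal R) : Prop :=
  I ≠ ⊤ ∧ ∀ a b : R, a * b ∈ I → a ∉ (⊥ : Ideal R).jacobson → b ∈ I

theorem SJIdealWith.of_isJIdeal_colon {R : Type*} [CommRing R] {S : Set R} {I : Ideal R}
    {s : R} (hs : s ∈ S) (h : IsJIdeal (I.colon (span {s}))) : SJIdealWith S I s := by
  refine ⟨hs, fun a b hab => or_iff_not_imp_left.2 fun hsa => ?_⟩
  have ha : a ∉ (⊥ : Ideal R).jacobson := fun ha => hsa (mul_mem_left _ s ha)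
  have hab' : a * b ∈ I.colon (span {s}) :=
    mem_colon_span_singleton.2 (mul_comm (a * b) s ▸ I.mul_mem_left s hab)
  simpa only [mul_comm b s] using mem_colon_span_singleton.1 (h.2 a b hab' ha)

theorem stmt2_general {R : Type*} [CommRing R] (S : Set R)
    (I : Ideal R) (hdisj : S ∩ (I : Set R) = ∅)
    (s : R) (hs : s ∈ S) (h : IsJIdeal (I.colon (Ideal.span {s}))) :
    IsSJIdeal S I :=
  ⟨hdisj, s, SJIdealWith.of_isJIdeal_colon hs h⟩

theorem stmt2 {R : Type*} [CommRing R] (S : Set R) (hS : MulClosed S)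
    (I : Ideal R) (hdisj : S ∩ (I : Set R) = ∅)
    (s : R) (hs : s ∈ S) (h : IsJIdeal (I.colon (Ideal.span {s}))) :
    IsSJIdeal S I :=
  stmt2_general S I hdisj s hs h
end

section
/- Suppose J(R) is a J-ideal of R and J(R) ∩ S = ∅. If I is an S-J-ideal of R, then there exists s ∈ S such that (I : s) is a J-ideal of R. -/
open Ideal

section

variable {R : Type*} [CommRing R]

lemma colon_span_singleton_ne_top {I : Ideal R} {s : R} (hs : s ∉ I) :
    I.colon (span {s}) ≠ ⊤ := by
  rwa [Ideal.colon_span, Ne, Submodule.colon_eq_top_iff_subset, Set.singleton_subset_iff]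

lemma notMem_jacobson_of_mem {S : Set R} (hJS : ((⊥ : Ideal R).jacobson : Set R) ∩ S = ∅)
    {s : R} (hs : s ∈ S) : s ∉ (⊥ : Ideal R).jacobson :=
  fun hJ ↦ Set.eq_empty_iff_forall_notMem.mp hJS s ⟨hJ, hs⟩

lemma SJIdealWith.isJIdeal_colon {S : Set R} {I : Ideal R} {s : R} (hI : SJIdealWith S I s)
    (hJ : IsJIdeal ((⊥ : Ideal R).jacobson)) (hsJ : s ∉ (⊥ : Ideal R).jacobson)
    (hsI : s ∉ I) : IsJIdeal (I.colon (span {s})) := by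
  refine ⟨colon_span_singleton_ne_top hsI, fun a b hab haJ ↦ ?_⟩
  rw [mem_colon_span_singleton] at hab ⊢
  have hsab : (s * a) * b ∈ I := by rwa [mul_comm (a * b) s, ← mul_assoc] at hab
  rcases hI.2 (s * a) b hsab with hssa | hsb
  · -- `s ∉ 𝒥(R)` can be cancelled twice from `s * (s * a) ∈ 𝒥(R)`.
    exact absurd (hJ.2 s a (hJ.2 s (s * a) hssa hsJ) hsJ) haJ
  · rwa [mul_comm]

end

theorem stmt3_general {R : Type*} [CommRing R] (S : Set R)
    (hJ : IsJIdeal ((⊥ : Ideal R).jacobson))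
    (hJS : (((⊥ : Ideal R).jacobson : Set R) ∩ S) = ∅)
    (I : Ideal R) (hI : IsSJIdeal S I) :
    ∃ s ∈ S, IsJIdeal (I.colon (Ideal.span {s})) := by
  obtain ⟨hSI, s, hs⟩ := hI
  have hsI : s ∉ I := fun hsI ↦ Set.eq_empty_iff_forall_notMem.mp hSI s ⟨hs.1, hsI⟩
  exact ⟨s, hs.1, hs.isJIdeal_colon hJ (notMem_jacobson_of_mem hJS hs.1) hsI⟩

theorem stmt3 {R : Type*} [CommRing R] (S : Set R) (hS : MulClosed S)
    (hJ : IsJIdeal ((⊥ : Ideal R).jacobson))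
    (hJS : (((⊥ : Ideal R).jacobson : Set R) ∩ S) = ∅)
    (I : Ideal R) (hI : IsSJIdeal S I) :
    ∃ s ∈ S, IsJIdeal (I.colon (Ideal.span {s})) :=
  stmt3_general S hJ hJS I hI
end

section
/- An ideal I of R with I ∩ S = ∅ is an S-J-ideal if and only if there exists s ∈ S such that for every a ∈ R with a ∉ (I : s), one has (I : a) ⊆ (J(R) : s). -/
open Ideal

theorem Ideal.forall_mul_mem_imp_or_iff_colon_le {R : Type*} [CommSemiring R]
    (I J : Ideal R) (s : R) :
    (∀ a b : R, a * b ∈ I → s * a ∈ J ∨ s * b ∈ I) ↔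
      ∀ b : R, b ∉ I.colon (span {s}) → I.colon (span {b}) ≤ J.colon (span {s}) := by
  simp only [SetLike.le_def, mem_colon_span_singleton, mul_comm _ s, or_iff_not_imp_right]
  exact ⟨fun h b hb a hab ↦ h a b (mul_comm b a ▸ hab) hb,
    fun h a b hab hb ↦ h b hb (mul_comm a b ▸ hab)⟩

theorem sJIdealWith_iff_colon_le {R : Type*} [CommRing R] (S : Set R) (I : Ideal R) (s : R) :
    SJIdealWith S I s ↔ s ∈ S ∧
      ∀ a : R, a ∉ I.colon (span {s}) →
        I.colon (span {a}) ≤ ((⊥ : Ideal R).jacobson).colon (span {s}) := by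
  rw [SJIdealWith, forall_mul_mem_imp_or_iff_colon_le]

theorem stmt4_general {R : Type*} [CommRing R] (S : Set R)
    (I : Ideal R) (hdisj : S ∩ (I : Set R) = ∅) :
    IsSJIdeal S I ↔
      ∃ s ∈ S, ∀ a : R, a ∉ I.colon (Ideal.span {s}) →
        I.colon (Ideal.span {a}) ≤ ((⊥ : Ideal R).jacobson).colon (Ideal.span {s}) := by
  simp only [IsSJIdeal, sJIdealWith_iff_colon_le, hdisj, true_and]

theorem stmt4 {R : Type*} [CommRing R] (S : Set R) (hS : MulClosed S)
    (I : Ideal R) (hdisj : S ∩ (I : Set R) = ∅) :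
    IsSJIdeal S I ↔
      ∃ s ∈ S, ∀ a : R, a ∉ I.colon (Ideal.span {s}) →
        I.colon (Ideal.span {a}) ≤ ((⊥ : Ideal R).jacobson).colon (Ideal.span {s}) :=
  stmt4_general S I hdisj
end

section
/- Let I be an ideal of R that equals an intersection of a nonempty family of maximal ideals of R. If I is finitely generated and I is an S-J-ideal of R, then J(R) is S-finite. -/
open Ideal

/-- An ideal `K` of `R` is `S`-finite if there exist `s ∈ S` and a finitely generated
ideal `F` with `s • K ⊆ F ⊆ K`. -/
def SFinite {R : Type*} [CommRing R] (S : Set R) (K : Ideal R) : Prop :=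
  ∃ s ∈ S, ∃ F : Ideal R, F.FG ∧ (∀ k ∈ K, s * k ∈ F) ∧ F ≤ K

/-!
Since `I` is an intersection of maximal ideals, `𝒥(R) ≤ I`. Taking `b = 1` in the `S`-`𝒥`
condition and using `s ∉ I` gives `s • I ⊆ 𝒥(R)`. Hence the finitely generated ideal
`F = (s) * I` satisfies `s • 𝒥(R) ⊆ F ⊆ 𝒥(R)`.
-/

theorem Ideal.jacobson_bot_le_sInf {R : Type*} [CommRing R] {𝔐 : Set (Ideal R)}
    (h𝔐 : ∀ M ∈ 𝔐, M.IsMaximal) : (⊥ : Ideal R).jacobson ≤ sInf 𝔐 :=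
  le_sInf fun M hM => sInf_le ⟨bot_le, h𝔐 M hM⟩

theorem SFinite.of_span_singleton_mul_le {R : Type*} [CommRing R] {S : Set R} {K I : Ideal R}
    {s : R} (hs : s ∈ S) (hKI : K ≤ I) (hI : I.FG) (hsI : span {s} * I ≤ K) : SFinite S K :=
  ⟨s, hs, span {s} * I, (Submodule.fg_span_singleton s).mul hI,
    fun _ hk => mul_mem_mul (mem_span_singleton_self s) (hKI hk), hsI⟩

theorem IsSJIdeal.notMem {R : Type*} [CommRing R] {S : Set R} {I : Ideal R}
    (hI : IsSJIdeal S I) {s : R} (hs : s ∈ S) : s ∉ I :=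
  fun h => (Set.eq_empty_iff_forall_notMem.mp hI.1) s ⟨hs, h⟩

theorem IsSJIdeal.exists_span_singleton_mul_le_jacobson {R : Type*} [CommRing R] {S : Set R}
    {I : Ideal R} (hI : IsSJIdeal S I) : ∃ s ∈ S, span {s} * I ≤ (⊥ : Ideal R).jacobson := by
  obtain ⟨s, hsS, hs⟩ := hI.2
  refine ⟨s, hsS, span_singleton_mul_le_iff.mpr fun a ha => ?_⟩
  exact (hs a 1 (by rwa [mul_one])).resolve_right (by simpa using hI.notMem hsS)

theorem stmt6_general {R : Type*} [CommRing R] (S : Set R)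
    (I : Ideal R)
    (hmax : ∃ 𝔐 : Set (Ideal R), 𝔐.Nonempty ∧ (∀ M ∈ 𝔐, M.IsMaximal) ∧ I = sInf 𝔐)
    (hfg : I.FG) (hI : IsSJIdeal S I) :
    SFinite S ((⊥ : Ideal R).jacobson) := by
  obtain ⟨𝔐, -, h𝔐, rfl⟩ := hmax
  obtain ⟨s, hs, hsI⟩ := hI.exists_span_singleton_mul_le_jacobson
  exact .of_span_singleton_mul_le hs (jacobson_bot_le_sInf h𝔐) hfg hsI

theorem stmt6 {R : Type*} [CommRing R] (S : Set R) (hS : MulClosed S)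
    (I : Ideal R)
    (hmax : ∃ 𝔐 : Set (Ideal R), 𝔐.Nonempty ∧ (∀ M ∈ 𝔐, M.IsMaximal) ∧ I = sInf 𝔐)
    (hfg : I.FG) (hI : IsSJIdeal S I) :
    SFinite S ((⊥ : Ideal R).jacobson) :=
  stmt6_general S I hmax hfg hI
end

section
/- Let I, J, and A be ideals of R such that A ⊄ (J(R) : s) for every s ∈ S. If I and J are S-J-ideals of R, I is finitely generated, and A·I = A·J, then J is S-finite. -/
open Ideal

/-! Cancelling from `A * J = A * I ⊆ I` an element `a ∈ A` with `s * a ∉ 𝒥(R)` gives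
`s * J ⊆ I`, and symmetrically `t * I ⊆ J`. Then `(t) * I` is finitely generated and
`s * t * J ⊆ (t) * I ⊆ J`. -/

theorem SJIdealWith.mul_mem_of_mul_le {R : Type*} [CommRing R] {S : Set R} {I J A : Ideal R}
    {s : R} (hI : SJIdealWith S I s)
    (hA : ¬ A ≤ ((⊥ : Ideal R).jacobson).colon (Ideal.span {s})) (hAJ : A * J ≤ I) :
    ∀ j ∈ J, s * j ∈ I := by
  obtain ⟨a, haA, ha⟩ := SetLike.not_le_iff_exists.mp hA
  rw [Ideal.mem_colon_span_singleton, mul_comm] at ha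
  intro j hj
  exact (hI.2 a j (hAJ (Ideal.mul_mem_mul haA hj))).resolve_left ha

theorem sFinite_of_mul_mem_of_mul_mem {R : Type*} [CommRing R] {S : Set R} {I J : Ideal R}
    {s t : R} (hst : s * t ∈ S) (hfg : I.FG) (hJI : ∀ j ∈ J, s * j ∈ I)
    (hIJ : ∀ i ∈ I, t * i ∈ J) : SFinite S J := by
  refine ⟨s * t, hst, Ideal.span {t} * I, (Submodule.fg_span_singleton t).mul hfg, ?_, ?_⟩
  · intro j hj
    rw [mul_comm s t, mul_assoc]
    exact Ideal.mul_mem_mul (Ideal.mem_span_singleton_self t) (hJI j hj)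
  · rw [Ideal.mul_le]
    intro r hr i hi
    obtain ⟨c, rfl⟩ := Ideal.mem_span_singleton'.mp hr
    rw [mul_assoc]
    exact J.mul_mem_left c (hIJ i hi)

theorem stmt7 {R : Type*} [CommRing R] (S : Set R) (hS : MulClosed S)
    (I J A : Ideal R)
    (hA : ∀ s ∈ S, ¬ A ≤ ((⊥ : Ideal R).jacobson).colon (Ideal.span {s}))
    (hI : IsSJIdeal S I) (hJ : IsSJIdeal S J) (hfg : I.FG)
    (hAIJ : A * I = A * J) : SFinite S J := by
  obtain ⟨-, s, hs⟩ := hI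
  obtain ⟨-, t, ht⟩ := hJ
  have hJI : ∀ j ∈ J, s * j ∈ I :=
    hs.mul_mem_of_mul_le (hA s hs.1) (hAIJ.symm.le.trans Ideal.mul_le_right)
  have hIJ : ∀ i ∈ I, t * i ∈ J :=
    ht.mul_mem_of_mul_le (hA t ht.1) (hAIJ.le.trans Ideal.mul_le_right)
  exact sFinite_of_mul_mem_of_mul_mem (hS.2 s hs.1 t ht.1) hfg hJI hIJ
end

section
/- Let I and A be ideals of R such that A ⊄ (J(R) : s) for every s ∈ S. If the ideal A·I is finitely generated and is an S-J-ideal of R, then I is S-finite. -/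
open Ideal

theorem SJIdealWith.mul_mem_of_not_mem_jacobson {R : Type*} [CommRing R] {S : Set R}
    {I : Ideal R} {s a b : R} (h : SJIdealWith S I s) (hab : a * b ∈ I)
    (ha : s * a ∉ (⊥ : Ideal R).jacobson) : s * b ∈ I :=
  (h.2 a b hab).resolve_left ha

theorem exists_mem_mul_not_mem_of_not_le_colon {R : Type*} [CommRing R] {A K : Ideal R}
    {s : R} (hA : ¬ A ≤ K.colon (span {s})) : ∃ a ∈ A, s * a ∉ K := by
  obtain ⟨a, haA, ha⟩ := Set.not_subset.mp hA
  exact ⟨a, haA, fun hsa => ha (mem_colon_span_singleton.mpr (by rwa [mul_comm]))⟩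

theorem SJIdealWith.mul_mem_mul_of_mem {R : Type*} [CommRing R] {S : Set R}
    {I A : Ideal R} {s : R} (h : SJIdealWith S (A * I) s)
    (hA : ¬ A ≤ ((⊥ : Ideal R).jacobson).colon (span {s})) {k : R} (hk : k ∈ I) :
    s * k ∈ A * I := by
  obtain ⟨a, haA, ha⟩ := exists_mem_mul_not_mem_of_not_le_colon hA
  exact h.mul_mem_of_not_mem_jacobson (mul_mem_mul haA hk) ha

theorem stmt8_general {R : Type*} [CommRing R] (S : Set R)
    (I A : Ideal R)
    (hA : ∀ s ∈ S, ¬ A ≤ ((⊥ : Ideal R).jacobson).colon (Ideal.span {s}))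
    (hfg : (A * I).FG) (hAI : IsSJIdeal S (A * I)) : SFinite S I := by
  obtain ⟨-, s, hs⟩ := hAI
  exact ⟨s, hs.1, A * I, hfg, fun _ hk => hs.mul_mem_mul_of_mem (hA s hs.1) hk, Ideal.mul_le_right⟩

theorem stmt8 {R : Type*} [CommRing R] (S : Set R) (hS : MulClosed S)
    (I A : Ideal R)
    (hA : ∀ s ∈ S, ¬ A ≤ ((⊥ : Ideal R).jacobson).colon (Ideal.span {s}))
    (hfg : (A * I).FG) (hAI : IsSJIdeal S (A * I)) : SFinite S I :=
  stmt8_general S I A hA hfg hAI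
end

section
/- If I is an S-J-ideal of R that is maximal with respect to being an S-J-ideal (i.e., no S-J-ideal of R properly contains I), then I is a prime ideal of R. -/
open Ideal

section

variable {R : Type*} [CommRing R] {S : Set R}

def MulClosed.toSubmonoid (hS : MulClosed S) : Submonoid R where
  carrier := S
  one_mem' := hS.1
  mul_mem' ha hb := hS.2 _ ha _ hb

lemma IsSJIdeal.ne_top (hS : (1 : R) ∈ S) {I : Ideal R} (hI : IsSJIdeal S I) : I ≠ ⊤ := by
  rintro rfl
  exact Set.eq_empty_iff_forall_notMem.1 hI.1 1 ⟨hS, Submodule.mem_top⟩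

lemma SJIdealWith.colon {I : Ideal R} {s : R} (h : SJIdealWith S I s) (x : R) :
    SJIdealWith S (I.colon {x}) s := by
  refine ⟨h.1, fun a b hab => ?_⟩
  simp only [Submodule.mem_colon_singleton, smul_eq_mul, mul_assoc] at hab ⊢
  exact h.2 a (b * x) hab

lemma sjIdealWith_of_mem_jacobson {u : R} (huS : u ∈ S) (huJ : u ∈ (⊥ : Ideal R).jacobson)
    (K : Ideal R) : SJIdealWith S K u :=
  ⟨huS, fun a _ _ => Or.inl (mul_mem_right a _ huJ)⟩

variable {I : Ideal R} (hI : IsSJIdeal S I) (hmax : ∀ K : Ideal R, IsSJIdeal S K → I ≤ K → K = I)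
include hI hmax

lemma mem_of_mul_mem_of_disjoint_colon {x y : R} (hx : S ∩ (I.colon {x} : Set R) = ∅)
    (hxy : x * y ∈ I) : y ∈ I := by
  have hy : y ∈ I.colon {x} := by
    rwa [Submodule.mem_colon_singleton, smul_eq_mul, mul_comm]
  rwa [hmax _ ⟨hx, hI.2.imp fun _ hs => hs.colon x⟩ le_colon] at hy

lemma mem_of_mul_mem_of_mem_of_maximal_sjIdeal (hS : MulClosed S) {t y : R} (ht : t ∈ S)
    (hty : t * y ∈ I) : y ∈ I := by
  refine mem_of_mul_mem_of_disjoint_colon hI hmax ?_ hty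
  refine Set.eq_empty_of_forall_notMem fun r ⟨hrS, hrI⟩ => ?_
  rw [SetLike.mem_coe, Submodule.mem_colon_singleton, smul_eq_mul] at hrI
  exact Set.eq_empty_iff_forall_notMem.1 hI.1 _ ⟨hS.2 r hrS t ht, hrI⟩

lemma isPrime_of_maximal_sjIdeal_of_mem_jacobson (hS : MulClosed S) {u : R} (huS : u ∈ S)
    (huJ : u ∈ (⊥ : Ideal R).jacobson) : I.IsPrime := by
  refine isPrime_of_maximally_disjoint I hS.toSubmonoid ?_ fun K hIK hK => hIK.ne ?_
  · exact Set.disjoint_iff_inter_eq_empty.2 (Set.inter_comm S I ▸ hI.1)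
  · have hK' : IsSJIdeal S K :=
      ⟨Set.inter_comm (K : Set R) S ▸ Set.disjoint_iff_inter_eq_empty.1 hK,
        u, sjIdealWith_of_mem_jacobson huS huJ K⟩
    exact (hmax K hK' hIK.le).symm

lemma isPrime_of_maximal_sjIdeal_of_disjoint_jacobson (hS : MulClosed S)
    (hSJ : ∀ u ∈ S, u ∉ (⊥ : Ideal R).jacobson) : I.IsPrime := by
  obtain ⟨s, hsS, hs⟩ := hI.2
  refine ⟨hI.ne_top hS.1, fun {a b} hab => or_iff_not_imp_left.2 fun ha => ?_⟩
  refine mem_of_mul_mem_of_disjoint_colon hI hmax ?_ hab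
  refine Set.eq_empty_of_forall_notMem fun t ⟨htS, htI⟩ => ?_
  rw [SetLike.mem_coe, Submodule.mem_colon_singleton, smul_eq_mul] at htI
  rcases hs t a htI with hJ | hsa
  · exact hSJ _ (hS.2 s hsS t htS) hJ
  · exact ha (mem_of_mul_mem_of_mem_of_maximal_sjIdeal hI hmax hS hsS hsa)

end

theorem stmt10 {R : Type*} [CommRing R] (S : Set R) (hS : MulClosed S)
    (I : Ideal R) (hI : IsSJIdeal S I)
    (hmax : ∀ K : Ideal R, IsSJIdeal S K → I ≤ K → K = I) :
    I.IsPrime := by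
  by_cases hSJ : ∃ u ∈ S, u ∈ (⊥ : Ideal R).jacobson
  · obtain ⟨u, huS, huJ⟩ := hSJ
    exact isPrime_of_maximal_sjIdeal_of_mem_jacobson hI hmax hS huS huJ
  · push Not at hSJ
    exact isPrime_of_maximal_sjIdeal_of_disjoint_jacobson hI hmax hS hSJ
end

section
/- Let I be a prime ideal of R with I ∩ S = ∅ such that I = (J(R) : s) for some s ∈ S. Then I is an S-J-ideal of R, and every S-J-ideal of R is contained in I; in particular, I is maximal with respect to being an S-J-ideal. -/
open Ideal

section

variable {R : Type*} [CommRing R] {S : Set R}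

theorem Ideal.colon_span_singleton_le_of_isPrime {J P : Ideal R} [hP : P.IsPrime]
    (hJP : J ≤ P) {t : R} (ht : t ∉ P) : J.colon (span {t}) ≤ P := fun _ hx =>
  (hP.mem_or_mem (hJP (Ideal.mem_colon_span_singleton.mp hx))).resolve_right ht

theorem sjIdealWith_colon_of_isPrime {s : R} (hs : s ∈ S)
    (hprime : ((⊥ : Ideal R).jacobson.colon (span {s})).IsPrime) :
    SJIdealWith S ((⊥ : Ideal R).jacobson.colon (span {s})) s := by
  refine ⟨hs, fun a b hab => (hprime.mem_or_mem hab).imp (fun ha => ?_) (mul_mem_left _ s)⟩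
  rw [mul_comm]
  exact Ideal.mem_colon_span_singleton.mp ha

theorem IsSJIdeal.exists_le_colon {K : Ideal R} (hK : IsSJIdeal S K) :
    ∃ t ∈ S, K ≤ (⊥ : Ideal R).jacobson.colon (span {t}) := by
  obtain ⟨hdisj, t, htS, ht⟩ := hK
  refine ⟨t, htS, fun k hk => Ideal.mem_colon_span_singleton.mpr ?_⟩
  -- `b = 1` in the defining property
  have htk := ht k 1 (by rwa [mul_one])
  rw [mul_one, mul_comm] at htk
  exact htk.resolve_right ((Set.disjoint_iff_inter_eq_empty.mpr hdisj).notMem_of_mem_left htS)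

end

theorem stmt11_general {R : Type*} [CommRing R] (S : Set R)
    (I : Ideal R) (hprime : I.IsPrime) (hdisj : S ∩ (I : Set R) = ∅)
    (s : R) (hs : s ∈ S)
    (hIs : I = ((⊥ : Ideal R).jacobson).colon (Ideal.span {s})) :
    IsSJIdeal S I ∧ ∀ K : Ideal R, IsSJIdeal S K → K ≤ I := by
  subst hIs
  refine ⟨⟨hdisj, s, sjIdealWith_colon_of_isPrime hs hprime⟩, fun K hK => ?_⟩
  obtain ⟨t, htS, hKt⟩ := hK.exists_le_colon
  exact hKt.trans <| colon_span_singleton_le_of_isPrime le_colon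
    ((Set.disjoint_iff_inter_eq_empty.mpr hdisj).notMem_of_mem_left htS)

theorem stmt11 {R : Type*} [CommRing R] (S : Set R) (hS : MulClosed S)
    (I : Ideal R) (hprime : I.IsPrime) (hdisj : S ∩ (I : Set R) = ∅)
    (s : R) (hs : s ∈ S)
    (hIs : I = ((⊥ : Ideal R).jacobson).colon (Ideal.span {s})) :
    IsSJIdeal S I ∧ ∀ K : Ideal R, IsSJIdeal S K → K ≤ I :=
  stmt11_general S I hprime hdisj s hs hIs
end

section
/- Let I be an ideal of R with I ∩ S = ∅, and let s ∈ S satisfy (J(R) : s) = J(R). Then I is an S-J-ideal associated with s if and only if both of the following hold: (i) for all a, b ∈ R with ab ∈ I, either a·s ∈ J*(I) or b·s ∈ I, where J*(I) is the intersection of all maximal ideals of R containing I; and (ii) I ⊆ (J(R) : s). -/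
open Ideal

/-!
Both sides force `I ⊆ (𝒥(R) : s) = 𝒥(R)`: on the left, take `b = 1` and use `s ∉ I`. Once
`I ⊆ 𝒥(R)`, the ideal `J*(I)` equals `𝒥(R)`, and condition (i) becomes the defining condition
of an `S`-`𝒥`-ideal associated with `s`.
-/

theorem Ideal.jacobson_eq_jacobson_bot_of_le {R : Type*} [CommRing R] {I : Ideal R}
    (h : I ≤ (⊥ : Ideal R).jacobson) : I.jacobson = (⊥ : Ideal R).jacobson :=
  le_antisymm (jacobson_idem (I := (⊥ : Ideal R)) ▸ jacobson_mono h) (jacobson_mono bot_le)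

theorem SJIdealWith.le_colon {R : Type*} [CommRing R] {S : Set R} {I : Ideal R} {s : R}
    (h : SJIdealWith S I s) (hsI : s ∉ I) :
    I ≤ ((⊥ : Ideal R).jacobson).colon (Ideal.span {s}) := by
  intro x hx
  rw [mem_colon_span_singleton, mul_comm]
  exact (h.2 x 1 (by simpa using hx)).resolve_right (by simpa using hsI)

theorem sJIdealWith_iff_of_le_jacobson {R : Type*} [CommRing R] {S : Set R} {I : Ideal R}
    {s : R} (hs : s ∈ S) (hI : I ≤ (⊥ : Ideal R).jacobson) :
    SJIdealWith S I s ↔ ∀ a b : R, a * b ∈ I → a * s ∈ I.jacobson ∨ b * s ∈ I := by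
  simp only [SJIdealWith, hs, true_and, jacobson_eq_jacobson_bot_of_le hI, mul_comm s]

theorem stmt12_general {R : Type*} [CommRing R] (S : Set R)
    (I : Ideal R) (hdisj : S ∩ (I : Set R) = ∅)
    (s : R) (hs : s ∈ S)
    (hJs : ((⊥ : Ideal R).jacobson).colon (Ideal.span {s}) = (⊥ : Ideal R).jacobson) :
    SJIdealWith S I s ↔
      ((∀ a b : R, a * b ∈ I → a * s ∈ I.jacobson ∨ b * s ∈ I) ∧
        I ≤ ((⊥ : Ideal R).jacobson).colon (Ideal.span {s})) := by
  have hsI : s ∉ I := fun h => (Set.eq_empty_iff_forall_notMem.1 hdisj) s ⟨hs, h⟩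
  constructor
  · intro h
    have hle := h.le_colon hsI
    exact ⟨(sJIdealWith_iff_of_le_jacobson hs (hJs ▸ hle)).1 h, hle⟩
  · rintro ⟨hcond, hle⟩
    exact (sJIdealWith_iff_of_le_jacobson hs (hJs ▸ hle)).2 hcond

theorem stmt12 {R : Type*} [CommRing R] (S : Set R) (hS : MulClosed S)
    (I : Ideal R) (hdisj : S ∩ (I : Set R) = ∅)
    (s : R) (hs : s ∈ S)
    (hJs : ((⊥ : Ideal R).jacobson).colon (Ideal.span {s}) = (⊥ : Ideal R).jacobson) :
    SJIdealWith S I s ↔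
      ((∀ a b : R, a * b ∈ I → a * s ∈ I.jacobson ∨ b * s ∈ I) ∧
        I ≤ ((⊥ : Ideal R).jacobson).colon (Ideal.span {s})) :=
  stmt12_general S I hdisj s hs hJs
end

section
/- Let ψ : R₁ → R₂ be a surjective ring homomorphism of commutative rings with identity and S a multiplicatively closed subset of R₁. If P is an S-J-ideal of R₁ with ker(ψ) ⊆ P, then the image ideal ψ(P) is a ψ(S)-J-ideal of R₂, where ψ(S) is the multiplicatively closed subset {ψ(s) : s ∈ S} of R₂. -/
open Ideal

section

variable {R₁ R₂ : Type*} [CommRing R₁] [CommRing R₂] {ψ : R₁ →+* R₂}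

theorem Ideal.map_mem_jacobson_bot_of_surjective (hψ : Function.Surjective ψ) {x : R₁}
    (hx : x ∈ (⊥ : Ideal R₁).jacobson) : ψ x ∈ (⊥ : Ideal R₂).jacobson := by
  rw [← Ideal.mem_comap, Ideal.comap_jacobson_of_surjective hψ]
  exact Ideal.jacobson_mono bot_le hx

theorem Ideal.mem_of_map_mem_map_of_ker_le (hψ : Function.Surjective ψ) {P : Ideal R₁}
    (hker : RingHom.ker ψ ≤ P) {x : R₁} (hx : ψ x ∈ P.map ψ) : x ∈ P := by
  rwa [← Ideal.mem_comap, Ideal.comap_map_of_surjective' ψ hψ, sup_eq_left.mpr hker] at hx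

theorem Set.image_inter_map_eq_empty_of_ker_le (hψ : Function.Surjective ψ) {S : Set R₁}
    {P : Ideal R₁} (hker : RingHom.ker ψ ≤ P) (hSP : S ∩ (P : Set R₁) = ∅) :
    ψ '' S ∩ (P.map ψ : Set R₂) = ∅ := by
  rw [Set.eq_empty_iff_forall_notMem]
  rintro _ ⟨⟨x, hxS, rfl⟩, hxP⟩
  exact hSP.subset ⟨hxS, Ideal.mem_of_map_mem_map_of_ker_le hψ hker hxP⟩

theorem SJIdealWith.map (hψ : Function.Surjective ψ) {S : Set R₁} {P : Ideal R₁}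
    (hker : RingHom.ker ψ ≤ P) {s : R₁} (hs : SJIdealWith S P s) :
    SJIdealWith (ψ '' S) (P.map ψ) (ψ s) := by
  refine ⟨Set.mem_image_of_mem ψ hs.1, fun a b hab ↦ ?_⟩
  obtain ⟨a, rfl⟩ := hψ a
  obtain ⟨b, rfl⟩ := hψ b
  rw [← map_mul] at hab
  rcases hs.2 a b (Ideal.mem_of_map_mem_map_of_ker_le hψ hker hab) with ha | hb
  · exact .inl (map_mul ψ s a ▸ Ideal.map_mem_jacobson_bot_of_surjective hψ ha)
  · exact .inr (map_mul ψ s b ▸ Ideal.mem_map_of_mem ψ hb)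

end

theorem stmt13_general {R₁ R₂ : Type*} [CommRing R₁] [CommRing R₂] (ψ : R₁ →+* R₂)
    (hsurj : Function.Surjective ψ) (S : Set R₁)
    (P : Ideal R₁) (hker : RingHom.ker ψ ≤ P) (hP : IsSJIdeal S P) :
    IsSJIdeal (ψ '' S) (P.map ψ) := by
  obtain ⟨hdisj, s, hs⟩ := hP
  exact ⟨Set.image_inter_map_eq_empty_of_ker_le hsurj hker hdisj, ψ s, hs.map hsurj hker⟩

theorem stmt13 {R₁ R₂ : Type*} [CommRing R₁] [CommRing R₂] (ψ : R₁ →+* R₂)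
    (hsurj : Function.Surjective ψ) (S : Set R₁) (hS : MulClosed S)
    (P : Ideal R₁) (hker : RingHom.ker ψ ≤ P) (hP : IsSJIdeal S P) :
    IsSJIdeal (ψ '' S) (P.map ψ) :=
  stmt13_general ψ hsurj S P hker hP
end

section
/- Let ψ : R₁ → R₂ be a surjective ring homomorphism of commutative rings with identity and S a multiplicatively closed subset of R₁. If L is a ψ(S)-J-ideal of R₂ (where ψ(S) = {ψ(s) : s ∈ S}) and ker(ψ) ⊆ J(R₁), then the preimage ψ⁻¹(L) is an S-J-ideal of R₁. -/
open Ideal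

theorem Ideal.comap_jacobson_bot_of_ker_le {R₁ R₂ : Type*} [CommRing R₁] [CommRing R₂]
    {ψ : R₁ →+* R₂} (hsurj : Function.Surjective ψ)
    (hker : RingHom.ker ψ ≤ (⊥ : Ideal R₁).jacobson) :
    (⊥ : Ideal R₂).jacobson.comap ψ = (⊥ : Ideal R₁).jacobson := by
  -- the left side is `𝒥(ker ψ)`, squeezed between `𝒥(0)` and `𝒥(𝒥(0)) = 𝒥(0)`
  rw [comap_jacobson_of_surjective hsurj, ← RingHom.ker_eq_comap_bot]
  exact le_antisymm ((jacobson_mono hker).trans_eq jacobson_idem) (jacobson_mono bot_le)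

theorem SJIdealWith.comap {R₁ R₂ : Type*} [CommRing R₁] [CommRing R₂] {ψ : R₁ →+* R₂}
    (hsurj : Function.Surjective ψ) (hker : RingHom.ker ψ ≤ (⊥ : Ideal R₁).jacobson)
    {S : Set R₁} {L : Ideal R₂} {s : R₁} (hs : s ∈ S) (h : SJIdealWith (ψ '' S) L (ψ s)) :
    SJIdealWith S (L.comap ψ) s := by
  refine ⟨hs, fun a b hab => ?_⟩
  rw [mem_comap, map_mul] at hab
  rcases h.2 (ψ a) (ψ b) hab with ha | hb
  · left
    rw [← comap_jacobson_bot_of_ker_le hsurj hker, mem_comap, map_mul]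
    exact ha
  · right
    rwa [mem_comap, map_mul]

theorem stmt14_general {R₁ R₂ : Type*} [CommRing R₁] [CommRing R₂] (ψ : R₁ →+* R₂)
    (hsurj : Function.Surjective ψ) (S : Set R₁)
    (L : Ideal R₂) (hker : RingHom.ker ψ ≤ (⊥ : Ideal R₁).jacobson)
    (hL : IsSJIdeal (ψ '' S) L) : IsSJIdeal S (L.comap ψ) := by
  obtain ⟨hdisj, _, hsL⟩ := hL
  obtain ⟨s, hs, rfl⟩ := hsL.1
  refine ⟨?_, s, hsL.comap hsurj hker hs⟩
  rw [← Set.image_eq_empty, coe_comap, Set.image_inter_preimage, hdisj]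

theorem stmt14 {R₁ R₂ : Type*} [CommRing R₁] [CommRing R₂] (ψ : R₁ →+* R₂)
    (hsurj : Function.Surjective ψ) (S : Set R₁) (hS : MulClosed S)
    (L : Ideal R₂) (hker : RingHom.ker ψ ≤ (⊥ : Ideal R₁).jacobson)
    (hL : IsSJIdeal (ψ '' S) L) : IsSJIdeal S (L.comap ψ) :=
  stmt14_general ψ hsurj S L hker hL
end

section
/- Let R₁ and R₂ be commutative rings with identity, S₁ ⊆ R₁ and S₂ ⊆ R₂ multiplicatively closed subsets, and I₁ an ideal of R₁. Then the ideal I₁ × R₂ of the product ring R₁ × R₂ is an (S₁ × S₂)-J-ideal of R₁ × R₂ if and only if I₁ is an S₁-J-ideal of R₁ and J(R₂) ∩ S₂ ≠ ∅. -/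
open Ideal

/-! A single `s = (s₁, s₂)` witnesses `I₁ × R₂` iff `s₁` witnesses `I₁` and, once `s₁ ∉ I₁`,
`s₂ ∈ 𝒥(R₂)`: testing `(0, 1) * (1, 0) ∈ I₁ × R₂` forces `s₂ ∈ 𝒥(R₂)`, and conversely
`s₂ ∈ 𝒥(R₂)` makes the second coordinate of `s * a` land in `𝒥(R₂)` for every `a`. -/

section

variable {R₁ R₂ : Type*} [CommRing R₁] [CommRing R₂]

theorem mem_jacobson_bot_prod {x : R₁ × R₂} :
    x ∈ (⊥ : Ideal (R₁ × R₂)).jacobson ↔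
      x.1 ∈ (⊥ : Ideal R₁).jacobson ∧ x.2 ∈ (⊥ : Ideal R₂).jacobson := by
  simp only [mem_jacobson_bot, Prod.isUnit_iff]
  refine ⟨fun h => ⟨fun u => by simpa using (h (u, 0)).1, fun v => by simpa using (h (0, v)).2⟩,
    fun h y => ⟨h.1 y.1, h.2 y.2⟩⟩

theorem inter_prod_top_eq_empty_iff {S₁ : Set R₁} {S₂ : Set R₂} (hS₂ : S₂.Nonempty)
    (I₁ : Ideal R₁) :
    S₁ ×ˢ S₂ ∩ (I₁.prod (⊤ : Ideal R₂) : Set (R₁ × R₂)) = ∅ ↔ S₁ ∩ (I₁ : Set R₁) = ∅ := by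
  obtain ⟨t, ht⟩ := hS₂
  simp only [Set.eq_empty_iff_forall_notMem, Set.mem_inter_iff, Set.mem_prod, SetLike.mem_coe,
    mem_prod, Submodule.mem_top, and_true, not_and, Prod.forall]
  exact ⟨fun h x hx => h x t ⟨hx, ht⟩, fun h x _ hx => h x hx.1⟩

variable {S₁ : Set R₁} {S₂ : Set R₂} {I₁ : Ideal R₁} {s₁ : R₁} {s₂ : R₂}

theorem SJIdealWith.of_prod_top (h : SJIdealWith (S₁ ×ˢ S₂) (I₁.prod ⊤) (s₁, s₂)) :
    SJIdealWith S₁ I₁ s₁ := by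
  refine ⟨h.1.1, fun a b hab => ?_⟩
  rcases h.2 (a, 1) (b, 1) ((mem_prod _ _).mpr ⟨hab, trivial⟩) with ha | hb
  · exact .inl (mem_jacobson_bot_prod.mp ha).1
  · exact .inr ((mem_prod _ _).mp hb).1

theorem SJIdealWith.snd_mem_jacobson_of_prod_top
    (h : SJIdealWith (S₁ ×ˢ S₂) (I₁.prod ⊤) (s₁, s₂)) (hs₁ : s₁ ∉ I₁) :
    s₂ ∈ (⊥ : Ideal R₂).jacobson := by
  rcases h.2 (0, 1) (1, 0) (by simp [mem_prod]) with h0 | h1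
  · simpa using (mem_jacobson_bot_prod.mp h0).2
  · exact absurd (by simpa using ((mem_prod _ _).mp h1).1) hs₁

theorem SJIdealWith.prod_top (h : SJIdealWith S₁ I₁ s₁) (hs₂ : s₂ ∈ S₂)
    (hs₂J : s₂ ∈ (⊥ : Ideal R₂).jacobson) :
    SJIdealWith (S₁ ×ˢ S₂) (I₁.prod ⊤) (s₁, s₂) := by
  refine ⟨⟨h.1, hs₂⟩, fun a b hab => ?_⟩
  rcases h.2 a.1 b.1 ((mem_prod _ _).mp hab).1 with ha | hb
  · exact .inl (mem_jacobson_bot_prod.mpr ⟨ha, mul_mem_right _ _ hs₂J⟩)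
  · exact .inr ((mem_prod _ _).mpr ⟨hb, trivial⟩)

end

theorem stmt17_general {R₁ R₂ : Type*} [CommRing R₁] [CommRing R₂]
    (S₁ : Set R₁) (S₂ : Set R₂)
    (I₁ : Ideal R₁) :
    IsSJIdeal (S₁ ×ˢ S₂) (I₁.prod (⊤ : Ideal R₂)) ↔
      (IsSJIdeal S₁ I₁ ∧ (((⊥ : Ideal R₂).jacobson : Set R₂) ∩ S₂).Nonempty) := by
  constructor
  · rintro ⟨hdisj, ⟨s₁, s₂⟩, hs⟩
    have hdisj₁ := (inter_prod_top_eq_empty_iff ⟨s₂, hs.1.2⟩ I₁).mp hdisj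
    have hs₁ : s₁ ∉ I₁ := fun hs₁I => hdisj₁.subset ⟨hs.1.1, hs₁I⟩
    exact ⟨⟨hdisj₁, s₁, hs.of_prod_top⟩, s₂, hs.snd_mem_jacobson_of_prod_top hs₁, hs.1.2⟩
  · rintro ⟨⟨hdisj₁, s₁, hs₁⟩, t, htJ, htS⟩
    exact ⟨(inter_prod_top_eq_empty_iff ⟨t, htS⟩ I₁).mpr hdisj₁, (s₁, t), hs₁.prod_top htS htJ⟩

theorem stmt17 {R₁ R₂ : Type*} [CommRing R₁] [CommRing R₂]
    (S₁ : Set R₁) (S₂ : Set R₂) (hS₁ : MulClosed S₁) (hS₂ : MulClosed S₂)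
    (I₁ : Ideal R₁) :
    IsSJIdeal (S₁ ×ˢ S₂) (I₁.prod (⊤ : Ideal R₂)) ↔
      (IsSJIdeal S₁ I₁ ∧ (((⊥ : Ideal R₂).jacobson : Set R₂) ∩ S₂).Nonempty) :=
  stmt17_general S₁ S₂ I₁
end

section
/- Let M be an R-module and let R ⊞ M denote the idealization (trivial square-zero extension) of M over R, the ring with underlying set R × M, componentwise addition, and multiplication (a₁, m₁)(a₂, m₂) = (a₁a₂, a₁m₂ + a₂m₁). Let S_M = S ⊞ M = {(s, m) : s ∈ S, m ∈ M}, a multiplicatively closed subset of R ⊞ M, and let I be an ideal of R with I ∩ S = ∅. Then I ⊞ M = {(a, m) : a ∈ I, m ∈ M} is an S_M-J-ideal of R ⊞ M if and only if I is an S-J-ideal of R. -/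
open Ideal

/-! The projection `R ⊞ M → R` is surjective and its kernel `0 ⊞ M` lies in the Jacobson
radical (an element of `R ⊞ M` is a unit iff its first coordinate is), so `J(R ⊞ M)` is the
preimage of `J(R)`. Along any surjection with this property, the `S`-`J`-condition for `I` and
for its preimage are the same statement, read through the surjection. -/

section Surjective

variable {A R : Type*} [CommRing A] [CommRing R] {f : A →+* R}

lemma Ideal.comap_jacobson_bot_of_ker_le_s19 (hf : Function.Surjective f)
    (hker : RingHom.ker f ≤ (⊥ : Ideal A).jacobson) :
    (⊥ : Ideal R).jacobson.comap f = (⊥ : Ideal A).jacobson := by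
  rw [comap_jacobson_of_surjective hf, ← RingHom.ker_eq_comap_bot]
  refine le_antisymm ?_ (jacobson_mono bot_le)
  simpa using jacobson_mono hker

lemma sJIdealWith_comap_iff (hf : Function.Surjective f)
    (hker : RingHom.ker f ≤ (⊥ : Ideal A).jacobson) (S : Set R) (I : Ideal R) (x : A) :
    SJIdealWith (f ⁻¹' S) (I.comap f) x ↔ SJIdealWith S I (f x) := by
  simp only [SJIdealWith, ← comap_jacobson_bot_of_ker_le_s19 hf hker, Set.mem_preimage, mem_comap,
    map_mul]
  exact and_congr_right fun _ ↦
    (hf.forall₂ (p := fun a b ↦ a * b ∈ I → f x * a ∈ (⊥ : Ideal R).jacobson ∨ f x * b ∈ I)).symm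

lemma isSJIdeal_comap_iff (hf : Function.Surjective f)
    (hker : RingHom.ker f ≤ (⊥ : Ideal A).jacobson) (S : Set R) (I : Ideal R) :
    IsSJIdeal (f ⁻¹' S) (I.comap f) ↔ IsSJIdeal S I := by
  have hdisj : f ⁻¹' S ∩ (I.comap f : Set A) = ∅ ↔ S ∩ (I : Set R) = ∅ := by
    rw [coe_comap, ← Set.preimage_inter, ← Set.preimage_empty, Set.preimage_eq_preimage hf]
  simp only [IsSJIdeal, hdisj, sJIdealWith_comap_iff hf hker, hf.exists]

end Surjective

lemma TrivSqZeroExt.ker_fstHom_le_jacobson_bot {R M : Type*} [CommRing R] [AddCommGroup M]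
    [Module R M] [Module Rᵐᵒᵖ M] [IsCentralScalar R M] :
    RingHom.ker (fstHom R R M).toRingHom ≤ (⊥ : Ideal (TrivSqZeroExt R M)).jacobson := by
  intro x (hx : x.fst = 0)
  rw [mem_jacobson_bot]
  intro y
  rw [isUnit_iff_isUnit_fst, fst_add, fst_mul, hx, zero_mul, zero_add, fst_one]
  exact isUnit_one

theorem stmt19_general {R M : Type*} [CommRing R] [AddCommGroup M] [Module R M]
    [Module Rᵐᵒᵖ M] [IsCentralScalar R M]
    (S : Set R) (I : Ideal R) :
    IsSJIdeal {p : TrivSqZeroExt R M | p.fst ∈ S}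
        (Ideal.comap ((TrivSqZeroExt.fstHom R R M).toRingHom) I) ↔
      IsSJIdeal S I :=
  isSJIdeal_comap_iff (f := (TrivSqZeroExt.fstHom R R M).toRingHom)
    (fun r ↦ ⟨TrivSqZeroExt.inl r, rfl⟩) TrivSqZeroExt.ker_fstHom_le_jacobson_bot S I

theorem stmt19 {R M : Type*} [CommRing R] [AddCommGroup M] [Module R M]
    [Module Rᵐᵒᵖ M] [IsCentralScalar R M]
    (S : Set R) (hS : MulClosed S) (I : Ideal R) (hdisj : S ∩ (I : Set R) = ∅) :
    IsSJIdeal {p : TrivSqZeroExt R M | p.fst ∈ S}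
        (Ideal.comap ((TrivSqZeroExt.fstHom R R M).toRingHom) I) ↔
      IsSJIdeal S I :=
  stmt19_general S I
end
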